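/- (Exhaustiveness of SGRAND.) Suppose n ≥ 1 and let (S, e) be an SGRAND run. Then S g is nonempty for every g < 2^n, the queried vectors e 0, e 1, …, e (2^n − 1) are pairwise distinct, and every error vector in (Fin n → ZMod 2) equals e g for some g < 2^n; that is, the run without abandonment enumerates all of (Fin n → ZMod 2). -/

import Mathlib

/-- The index of the least reliable flipped bit: the largest coordinate `j`
with `e j ≠ 0` (as a natural number; `0` if `e = 0`). -/
def jstar {n : ℕ} (e : Fin n → ZMod 2) : ℕ :=
  (Finset.univ.filter fun j => e j ≠ 0).sup fun j => (j : ℕ)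

/-- The parent `π(e)` of an error vector: zero out coordinate `j*(e)` and,
if `j*(e) > 0`, set coordinate `j*(e) - 1` to `1`; `π(0) = 0`. -/
def parent {n : ℕ} (e : Fin n → ZMod 2) : Fin n → ZMod 2 :=
  if e = 0 then 0
  else fun j =>
    if (j : ℕ) = jstar e then 0
    else if 0 < jstar e ∧ (j : ℕ) = jstar e - 1 then 1
    else e j
/-- `deltaN k` is the vector with a `1` at the coordinate of index `k` and `0` elsewhere. -/
def deltaN {n : ℕ} (k : ℕ) : Fin n → ZMod 2 := fun i => if (i : ℕ) = k then 1 else 0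

/-- The children set `C(e)`. -/
def children {n : ℕ} (e : Fin n → ZMod 2) : Finset (Fin n → ZMod 2) :=
  if e = 0 then {deltaN 0}
  else if jstar e = n - 1 then ∅
  else {e + deltaN (jstar e + 1), e + deltaN (jstar e) + deltaN (jstar e + 1)}
/-- Likelihood of an error vector given per-bit likelihoods `q`. -/
noncomputable def Q {n : ℕ} (q : Fin n → ZMod 2 → NNReal) (e : Fin n → ZMod 2) : NNReal :=
  ∏ j, q j (e j)
/-- An SGRAND run: `S g` is the candidate set before the `(g+1)`-st query and
`E g` is the `(g+1)`-st queried error vector. -/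
def SGRANDRun {n : ℕ} (q : Fin n → ZMod 2 → NNReal)
    (S : ℕ → Finset (Fin n → ZMod 2)) (E : ℕ → Fin n → ZMod 2) : Prop :=
  S 0 = {0} ∧
  ∀ g, (S g).Nonempty →
    E g ∈ S g ∧ (∀ v ∈ S g, Q q v ≤ Q q (E g)) ∧
    S (g + 1) = (S g).erase (E g) ∪ children (E g)

/-!
The children map `C` is inverse to the parent map `π`: `c ∈ C e ↔ c ≠ 0 ∧ π c = e`, and `π`
strictly decreases `e ↦ if e = 0 then 0 else j*(e) + 1`. So `C` is the children map of a tree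
on `Fin n → ZMod 2` rooted at `0`. An SGRAND run is a search of this tree: each query moves a
frontier vertex to the visited set and adds its children to the frontier. Invariantly, frontier
and visited set are disjoint and every vertex of either has its parent visited; so no vertex is
queried twice, and an empty frontier means the visited set is closed under children, hence is
everything. After `g < 2 ^ n` queries the visited set has only `g` elements, so the frontier is
still nonempty; after `2 ^ n` queries the visited set is all of `Fin n → ZMod 2`.
-/

open Finset

section TreeSearch

variable {α : Type*}

structure IsRootedTree (root : α) (par : α → α) (ch : α → Finset α) : Prop where
  mem_children_iff {p c : α} : c ∈ ch p ↔ c ≠ root ∧ par c = p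
  exists_depth : ∃ depth : α → ℕ, ∀ v ≠ root, depth (par v) < depth v

variable {root : α} {par : α → α} {ch : α → Finset α}

theorem IsRootedTree.notMem_children_self (hT : IsRootedTree root par ch) (v : α) :
    v ∉ ch v := fun hv => by
  obtain ⟨hroot, hpar⟩ := hT.mem_children_iff.1 hv
  obtain ⟨depth, hdepth⟩ := hT.exists_depth
  exact (hdepth v hroot).ne (congrArg depth hpar)

theorem IsRootedTree.mem_of_children_subset (hT : IsRootedTree root par ch) {U : Finset α}
    (hroot : root ∈ U) (hU : ∀ v ∈ U, ch v ⊆ U) (v : α) : v ∈ U := by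
  obtain ⟨depth, hdepth⟩ := hT.exists_depth
  induction v using (measure depth).wf.induction with
  | _ v ih =>
    by_cases hv : v = root
    · exact hv ▸ hroot
    · exact hU _ (ih _ (hdepth v hv)) (hT.mem_children_iff.2 ⟨hv, rfl⟩)

variable [DecidableEq α]

/-- `V` is the set of visited vertices and `S` the frontier of a search of the tree. -/
structure IsSearchState (root : α) (par : α → α) (ch : α → Finset α) (V S : Finset α) : Prop where
  disjoint : Disjoint V S
  root_mem : root ∈ V ∪ S
  children_subset : ∀ v ∈ V, ch v ⊆ V ∪ S
  parent_mem : ∀ v ∈ V ∪ S, v ≠ root → par v ∈ V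

theorem isSearchState_empty_singleton : IsSearchState root par ch ∅ {root} where
  disjoint := disjoint_empty_left _
  root_mem := by simp
  children_subset := by simp
  parent_mem := by simp

theorem IsSearchState.step (hT : IsRootedTree root par ch) {V S : Finset α}
    (h : IsSearchState root par ch V S) {e : α} (he : e ∈ S) :
    IsSearchState root par ch (insert e V) (S.erase e ∪ ch e) := by
  have heV : e ∉ V := disjoint_right.1 h.disjoint he
  have hsub : V ∪ S ⊆ insert e V ∪ (S.erase e ∪ ch e) := by
    intro x; simp only [mem_union, mem_insert, mem_erase]; tauto
  refine ⟨disjoint_left.2 fun x hxV hxS => ?_, hsub h.root_mem, fun v hv => ?_,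
    fun v hv hroot => ?_⟩
  · rcases mem_union.1 hxS with hx | hx
    · obtain ⟨hxe, hxS⟩ := mem_erase.1 hx
      exact disjoint_left.1 h.disjoint ((mem_insert.1 hxV).resolve_left hxe) hxS
    · obtain ⟨hxr, rfl⟩ := hT.mem_children_iff.1 hx
      rcases mem_insert.1 hxV with hxe | hxV
      · exact hT.notMem_children_self x (by rwa [← hxe] at hx)
      · exact heV (h.parent_mem x (mem_union_left _ hxV) hxr)
  · rcases mem_insert.1 hv with rfl | hv
    · exact subset_union_right.trans subset_union_right
    · exact (h.children_subset v hv).trans hsub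
  · by_cases hv' : v ∈ ch e
    · exact (hT.mem_children_iff.1 hv').2 ▸ mem_insert_self _ _
    · refine mem_insert_of_mem (h.parent_mem v ?_ hroot)
      simp only [mem_union, mem_insert, mem_erase] at hv ⊢
      grind

theorem IsSearchState.eq_univ_of_frontier_empty [Fintype α] (hT : IsRootedTree root par ch)
    {V : Finset α} (h : IsSearchState root par ch V ∅) : V = univ :=
  eq_univ_of_forall <| hT.mem_of_children_subset (by simpa using h.root_mem)
    (by simpa using h.children_subset)

end TreeSearch

section ErrorVector

variable {n : ℕ} {e c : Fin n → ZMod 2}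

theorem le_jstar {j : Fin n} (h : e j ≠ 0) : (j : ℕ) ≤ jstar e :=
  le_sup (f := fun j : Fin n => (j : ℕ)) (by simpa using h)

theorem apply_eq_zero_of_jstar_lt {j : Fin n} (h : jstar e < j) : e j = 0 := by
  by_contra hj
  exact (le_jstar hj).not_gt h

theorem jstar_eq {k : ℕ} {hk : k < n} (hek : e ⟨k, hk⟩ ≠ 0)
    (h : ∀ j : Fin n, k < j → e j = 0) : jstar e = k :=
  le_antisymm (Finset.sup_le fun j hj => not_lt.1 fun hkj => (mem_filter.1 hj).2 (h j hkj))
    (le_jstar hek)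

theorem exists_apply_jstar (he : e ≠ 0) : ∃ j : Fin n, (j : ℕ) = jstar e ∧ e j = 1 := by
  obtain ⟨j, hje⟩ := Function.ne_iff.1 he
  obtain ⟨i, hi, hsup⟩ :=
    exists_mem_eq_sup (univ.filter fun j => e j ≠ 0) ⟨j, by simpa using hje⟩ fun j => (j : ℕ)
  exact ⟨i, hsup.symm, Fin.eq_one_of_ne_zero _ (mem_filter.1 hi).2⟩

theorem apply_jstar (he : e ≠ 0) {j : Fin n} (hj : (j : ℕ) = jstar e) : e j = 1 := by
  obtain ⟨i, hi, hei⟩ := exists_apply_jstar he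
  rwa [Fin.ext (hj.trans hi.symm)]

theorem parent_apply (hc : c ≠ 0) (j : Fin n) :
    parent c j = if (j : ℕ) = jstar c then 0 else if (j : ℕ) + 1 = jstar c then 1 else c j := by
  simp only [parent, if_neg hc]
  congr 2
  apply propext; omega

theorem jstar_lt (he : e ≠ 0) : jstar e < n := by
  obtain ⟨j, hj, -⟩ := exists_apply_jstar he
  exact hj ▸ j.isLt

theorem parent_eq_zero (hc : c ≠ 0) (h : jstar c = 0) : parent c = 0 := by
  funext j
  rw [parent_apply hc]
  split_ifs
  · rfl
  · omega
  · exact apply_eq_zero_of_jstar_lt (by omega)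

theorem jstar_parent (hc : c ≠ 0) {k : ℕ} (h : jstar c = k + 1) :
    parent c ≠ 0 ∧ jstar (parent c) = k := by
  have hk : k < n := by have := jstar_lt hc; omega
  have hpk : parent c ⟨k, hk⟩ = 1 := by simp [parent_apply hc, h]
  have hpk' : parent c ⟨k, hk⟩ ≠ 0 := by simp [hpk]
  refine ⟨fun h0 => hpk' (congrFun h0 _), jstar_eq hpk' fun j hj => ?_⟩
  rw [parent_apply hc]
  split_ifs
  · rfl
  · omega
  · exact apply_eq_zero_of_jstar_lt (by omega)

theorem parent_add_add_deltaN (he : e ≠ 0) (hk : jstar e + 1 < n) {d : Fin n → ZMod 2}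
    (hd : ∀ j : Fin n, (j : ℕ) ≠ jstar e → d j = 0) :
    e + d + deltaN (jstar e + 1) ≠ 0 ∧ parent (e + d + deltaN (jstar e + 1)) = e := by
  set c := e + d + deltaN (jstar e + 1) with hc_def
  have hck : c ⟨jstar e + 1, hk⟩ = 1 := by
    simp [hc_def, deltaN, apply_eq_zero_of_jstar_lt (e := e) (j := ⟨jstar e + 1, hk⟩) (by simp),
      hd ⟨jstar e + 1, hk⟩ (by simp)]
  have hck' : c ⟨jstar e + 1, hk⟩ ≠ 0 := by simp [hck]
  have hc : c ≠ 0 := fun h0 => hck' (congrFun h0 _)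
  have hjc : jstar c = jstar e + 1 := jstar_eq hck' fun j hj => by
    simp [hc_def, deltaN, apply_eq_zero_of_jstar_lt (e := e) (j := j) (by omega),
      hd j (by omega), show (j : ℕ) ≠ jstar e + 1 by omega]
  refine ⟨hc, funext fun j => ?_⟩
  rw [parent_apply hc, hjc]
  split_ifs with h1
  · exact (apply_eq_zero_of_jstar_lt (by omega)).symm
  · exact (apply_jstar he (by omega)).symm
  · simp [hc_def, deltaN, hd j (by omega), h1]

theorem children_of_ne_zero (he : e ≠ 0) (hk : jstar e + 1 < n) :
    children e = {e + deltaN (jstar e + 1), e + deltaN (jstar e) + deltaN (jstar e + 1)} := by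
  rw [children, if_neg he, if_neg (by omega)]

theorem eq_deltaN_zero_of_jstar_eq_zero (hc : c ≠ 0) (h : jstar c = 0) : c = deltaN 0 := by
  funext j
  by_cases hj : (j : ℕ) = 0
  · simp [deltaN, hj, apply_jstar hc (hj.trans h.symm)]
  · simp [deltaN, hj, apply_eq_zero_of_jstar_lt (e := c) (j := j) (by omega)]

theorem mem_children_parent (hc : c ≠ 0) : c ∈ children (parent c) := by
  cases h : jstar c with
  | zero =>
    rw [parent_eq_zero hc h, eq_deltaN_zero_of_jstar_eq_zero hc h]
    simp [children]
  | succ k =>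
    obtain ⟨hp, hjp⟩ := jstar_parent hc h
    have hk : k + 1 < n := h ▸ jstar_lt hc
    rw [children_of_ne_zero hp (by omega), hjp, mem_insert, mem_singleton]
    have htop : ∀ j : Fin n, (j : ℕ) = k + 1 → c j = 1 := fun j hj =>
      apply_jstar hc (hj.trans h.symm)
    have hbit : ∀ j : Fin n, (j : ℕ) = k → c j = c ⟨k, by omega⟩ := fun j hj =>
      congrArg c (Fin.ext hj)
    rcases (by decide : ∀ a : ZMod 2, a = 0 ∨ a = 1) (c ⟨k, by omega⟩) with hck | hck <;>
      rw [hck] at hbit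
    · right
      funext j
      simp only [Pi.add_apply, parent_apply hc, deltaN, h]
      split_ifs <;> simp_all [show (1 : ZMod 2) + 1 = 0 from rfl]
    · left
      funext j
      simp only [Pi.add_apply, parent_apply hc, deltaN, h]
      split_ifs <;> simp_all

theorem deltaN_zero_ne_zero (hn : 1 ≤ n) : (deltaN 0 : Fin n → ZMod 2) ≠ 0 := fun h => by
  simpa [deltaN] using congrFun h ⟨0, hn⟩

theorem jstar_deltaN_zero (hn : 1 ≤ n) : jstar (deltaN 0 : Fin n → ZMod 2) = 0 :=
  jstar_eq (hk := hn) (by simp [deltaN]) fun j hj => by simp [deltaN]; omega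

theorem mem_children_iff (hn : 1 ≤ n) : c ∈ children e ↔ c ≠ 0 ∧ parent c = e := by
  refine ⟨fun hc => ?_, fun ⟨hc, hpc⟩ => hpc ▸ mem_children_parent hc⟩
  by_cases he : e = 0
  · subst he
    rw [children, if_pos rfl, mem_singleton] at hc
    subst hc
    exact ⟨deltaN_zero_ne_zero hn, parent_eq_zero (deltaN_zero_ne_zero hn) (jstar_deltaN_zero hn)⟩
  by_cases hlast : jstar e = n - 1
  · simp [children, he, hlast] at hc
  have hk : jstar e + 1 < n := by have := jstar_lt he; omega
  rw [children_of_ne_zero he hk, mem_insert, mem_singleton] at hc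
  rcases hc with rfl | rfl
  · simpa using parent_add_add_deltaN he hk (d := 0) fun _ _ => rfl
  · exact parent_add_add_deltaN he hk fun j hj => by simp [deltaN, hj]

end ErrorVector

theorem isRootedTree_children {n : ℕ} (hn : 1 ≤ n) :
    IsRootedTree (0 : Fin n → ZMod 2) parent children where
  mem_children_iff := mem_children_iff hn
  exists_depth := ⟨fun e => if e = 0 then 0 else jstar e + 1, fun v hv => by
    cases h : jstar v with
    | zero => simp [parent_eq_zero hv h, hv]
    | succ k =>
      obtain ⟨hp, hjp⟩ := jstar_parent hv h
      simp [hp, hv, hjp, h]⟩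

namespace SGRANDRun

variable {n : ℕ} {q : Fin n → ZMod 2 → NNReal} {S : ℕ → Finset (Fin n → ZMod 2)}
  {E : ℕ → Fin n → ZMod 2}

theorem isSearchState (hn : 1 ≤ n) (hrun : SGRANDRun q S E) {g : ℕ}
    (hS : ∀ i < g, (S i).Nonempty) :
    IsSearchState 0 parent children ((range g).image E) (S g) ∧ ((range g).image E).card = g := by
  induction g with
  | zero => simpa [hrun.1] using isSearchState_empty_singleton
  | succ g ih =>
    obtain ⟨hstate, hcard⟩ := ih fun i hi => hS i (by omega)
    obtain ⟨hE, -, hstep⟩ := hrun.2 g (hS g (by omega))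
    rw [range_add_one, image_insert, hstep,
      card_insert_of_notMem (disjoint_right.1 hstate.disjoint hE), hcard]
    exact ⟨hstate.step (isRootedTree_children hn) hE, rfl⟩

theorem nonempty (hn : 1 ≤ n) (hrun : SGRANDRun q S E) : ∀ g < 2 ^ n, (S g).Nonempty := by
  intro g
  induction g using Nat.strong_induction_on with
  | _ g ih =>
    intro hg
    obtain ⟨hstate, hcard⟩ := hrun.isSearchState hn fun i hi => ih i hi (by omega)
    rw [nonempty_iff_ne_empty]
    intro hSg
    rw [hSg] at hstate
    rw [hstate.eq_univ_of_frontier_empty (isRootedTree_children hn), card_univ,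
      Fintype.card_fun, ZMod.card, Fintype.card_fin] at hcard
    omega

end SGRANDRun

theorem sgrand_exhaustive {n : ℕ} (hn : 1 ≤ n) (q : Fin n → ZMod 2 → NNReal)
    (S : ℕ → Finset (Fin n → ZMod 2)) (E : ℕ → Fin n → ZMod 2)
    (hrun : SGRANDRun q S E) :
    (∀ g < 2 ^ n, (S g).Nonempty) ∧
    (∀ g < 2 ^ n, ∀ h < 2 ^ n, g ≠ h → E g ≠ E h) ∧
    (∀ v : Fin n → ZMod 2, ∃ g < 2 ^ n, E g = v) := by
  have hne := hrun.nonempty hn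
  have hcard := (hrun.isSearchState hn hne).2
  have hinj : Set.InjOn E (range (2 ^ n)) := card_image_iff.1 (hcard.trans (card_range _).symm)
  have huniv : (range (2 ^ n)).image E = univ := eq_univ_of_card _ (by simp [hcard])
  refine ⟨hne, fun g hg h hh hgh hE => hgh (hinj (by simpa) (by simpa) hE), fun v => ?_⟩
  obtain ⟨g, hg, rfl⟩ := mem_image.1 (huniv ▸ mem_univ v)
  exact ⟨g, mem_range.1 hg, rfl⟩
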